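/- arXiv:math/0403035 — 10 statements merged into one kernel-verified Lean document; each statement's English description precedes it below -/
import Mathlib

section
/- Under the stated hypotheses, 0 is an asymptotically stable fixed point of the system x_{k+1} = f(x_k): (stability) for every ε > 0 there exists δ > 0 such that for every x with ‖x‖ < δ and every k ∈ ℕ one has ‖f⁽ᵏ⁾(x)‖ < ε; and (local attractivity) there exists r > 0 such that for every x with ‖x‖ < r, f⁽ᵏ⁾(x) → 0 as k → ∞. -/
/-!
Choose `m ≥ 1` with `‖A ^ m‖ < 1`. The adapted norm `V x = ∑_{k<m} ‖A ^ k x‖` dominates `‖x‖`, is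
`O(‖x‖)`, and `V (A x) = V x - ‖x‖ + ‖A ^ m x‖ ≤ V x - (1 - ‖A ^ m‖) ‖x‖`, so `A` shrinks `V` by a
fixed factor. Since `f x = A x + o(‖x‖)`, the same holds for `f` near `0` with some factor `θ < 1`:
`V` is a Lyapunov function, small sublevel sets of `V` are invariant, and `V (f^[k] x) ≤ θ ^ k V x`.
-/

open Filter Topology Finset

variable {𝕜 E : Type*} [NontriviallyNormedField 𝕜] [NormedAddCommGroup E] [NormedSpace 𝕜 E]

namespace ContinuousLinearMap

def adaptedNorm (A : E →L[𝕜] E) (m : ℕ) (x : E) : ℝ :=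
  ∑ k ∈ range m, ‖(A ^ k) x‖

variable (A : E →L[𝕜] E)

theorem norm_le_adaptedNorm {m : ℕ} (hm : 0 < m) (x : E) : ‖x‖ ≤ A.adaptedNorm m x := by
  calc ‖x‖ = ‖(A ^ 0) x‖ := by rw [pow_zero, one_apply_eq_self]
    _ ≤ A.adaptedNorm m x :=
      single_le_sum (f := fun k ↦ ‖(A ^ k) x‖) (fun k _ ↦ norm_nonneg _) (mem_range.2 hm)

theorem adaptedNorm_le (m : ℕ) (x : E) :
    A.adaptedNorm m x ≤ (∑ k ∈ range m, ‖A ^ k‖) * ‖x‖ := by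
  rw [adaptedNorm, sum_mul]
  gcongr with k
  exact (A ^ k).le_opNorm x

theorem adaptedNorm_add_le (m : ℕ) (x y : E) :
    A.adaptedNorm m (x + y) ≤ A.adaptedNorm m x + A.adaptedNorm m y := by
  rw [adaptedNorm, adaptedNorm, adaptedNorm, ← sum_add_distrib]
  gcongr with k
  rw [map_add]
  exact norm_add_le _ _

theorem adaptedNorm_apply_self (m : ℕ) (x : E) :
    A.adaptedNorm m (A x) = A.adaptedNorm m x - ‖x‖ + ‖(A ^ m) x‖ := by
  have hshift := sum_range_succ' (fun k ↦ ‖(A ^ k) x‖) m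
  rw [sum_range_succ] at hshift
  simp only [pow_succ, mul_apply_eq_comp, pow_zero, one_apply_eq_self] at hshift
  rw [adaptedNorm, adaptedNorm]
  linarith

theorem tendsto_adaptedNorm_zero (m : ℕ) : Tendsto (A.adaptedNorm m) (𝓝 0) (𝓝 0) := by
  have hcont : Continuous (A.adaptedNorm m) := by unfold adaptedNorm; fun_prop
  simpa [adaptedNorm] using hcont.tendsto 0

end ContinuousLinearMap

theorem HasFDerivAt.exists_adaptedNorm_contraction {A : E →L[𝕜] E} {m : ℕ} {f : E → E}
    (hf : HasFDerivAt f A 0) (hf0 : f 0 = 0) (hAm : ‖A ^ m‖ < 1) :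
    ∃ θ : ℝ, 0 ≤ θ ∧ θ < 1 ∧ ∀ᶠ x in 𝓝 0, A.adaptedNorm m (f x) ≤ θ * A.adaptedNorm m x := by
  set K := ∑ k ∈ range m, ‖A ^ k‖ + 1
  set s := 1 - ‖A ^ m‖
  set η := s / (2 * K)
  have hK : 1 ≤ K := le_add_of_nonneg_left (sum_nonneg fun k _ ↦ norm_nonneg _)
  have hs : 0 < s := sub_pos.2 hAm
  have hη : 0 < η := by positivity
  have hη1 : η ≤ 1 := by
    rw [div_le_one (by positivity)]
    linarith [sub_le_self 1 (norm_nonneg (A ^ m))]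
  have hKη : 2 * (K * η) = s := by simp only [η]; field_simp
  refine ⟨1 - η, sub_nonneg.2 hη1, sub_lt_self 1 hη, ?_⟩
  have hlin : ∀ᶠ x in 𝓝 0, ‖f x - A x‖ ≤ η * ‖x‖ := by
    simpa [hf0] using (hasFDerivAt_iff_isLittleO_nhds_zero.1 hf).def hη
  filter_upwards [hlin] with x hx
  have hVle y : A.adaptedNorm m y ≤ K * ‖y‖ :=
    (A.adaptedNorm_le m y).trans (by gcongr; linarith)
  calc A.adaptedNorm m (f x) = A.adaptedNorm m (A x + (f x - A x)) := by rw [add_sub_cancel]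
    _ ≤ A.adaptedNorm m (A x) + A.adaptedNorm m (f x - A x) := A.adaptedNorm_add_le m _ _
    _ ≤ (A.adaptedNorm m x - s * ‖x‖) + K * (η * ‖x‖) := by
        gcongr
        · rw [A.adaptedNorm_apply_self]
          linarith [(A ^ m).le_opNorm x]
        · exact (hVle _).trans (by gcongr)
    _ = A.adaptedNorm m x - η * (K * ‖x‖) := by linear_combination ‖x‖ * hKη
    _ ≤ A.adaptedNorm m x - η * A.adaptedNorm m x := by gcongr; exact hVle x
    _ = (1 - η) * A.adaptedNorm m x := by ring

theorem lyapunov_iterate_le {α : Type*} {f : α → α} {V : α → ℝ} {θ δ : ℝ}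
    (hV : ∀ x, 0 ≤ V x) (hθ0 : 0 ≤ θ) (hθ1 : θ ≤ 1) (hdecay : ∀ x, V x < δ → V (f x) ≤ θ * V x)
    {x : α} (hx : V x < δ) (k : ℕ) :
    V (f^[k] x) ≤ θ ^ k * V x := by
  induction k generalizing x with
  | zero => simp
  | succ k ih =>
    have hfx := hdecay x hx
    calc V (f^[k + 1] x) = V (f^[k] (f x)) := by rw [Function.iterate_succ_apply]
      _ ≤ θ ^ k * V (f x) := ih (hfx.trans_lt (by nlinarith [hV x]))
      _ ≤ θ ^ k * (θ * V x) := by gcongr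
      _ = θ ^ (k + 1) * V x := by ring

theorem asymptoticStability_of_lyapunov {X : Type*} [SeminormedAddCommGroup X] {f : X → X}
    {V : X → ℝ} {θ : ℝ} (hV : ∀ x, ‖x‖ ≤ V x) (hV0 : Tendsto V (𝓝 0) (𝓝 0))
    (hθ0 : 0 ≤ θ) (hθ1 : θ < 1) (hdecay : ∀ᶠ x in 𝓝 0, V (f x) ≤ θ * V x) :
    (∀ ε > 0, ∃ δ > 0, ∀ x : X, ‖x‖ < δ → ∀ k : ℕ, ‖f^[k] x‖ < ε) ∧
    (∃ r > 0, ∀ x : X, ‖x‖ < r → Tendsto (fun k => f^[k] x) atTop (𝓝 0)) := by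
  have hVnonneg x : 0 ≤ V x := (norm_nonneg x).trans (hV x)
  obtain ⟨δ, hδ, hball⟩ := Metric.eventually_nhds_iff.1 hdecay
  have hsublevel x (hx : V x < δ) : V (f x) ≤ θ * V x :=
    hball (by rw [dist_zero_right]; exact (hV x).trans_lt hx)
  have hbound {x} (hx : V x < δ) k : ‖f^[k] x‖ ≤ θ ^ k * V x :=
    (hV _).trans (lyapunov_iterate_le hVnonneg hθ0 hθ1.le hsublevel hx k)
  have hsmall {η} (hη : 0 < η) : ∃ r > 0, ∀ x : X, ‖x‖ < r → V x < η := by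
    simpa [Metric.eventually_nhds_iff, dist_zero_right] using
      hV0.eventually (gt_mem_nhds hη)
  constructor
  · intro ε hε
    obtain ⟨r, hr, hVr⟩ := hsmall (lt_min hδ hε)
    refine ⟨r, hr, fun x hx k ↦ ?_⟩
    have hVx := lt_min_iff.1 (hVr x hx)
    calc ‖f^[k] x‖ ≤ θ ^ k * V x := hbound hVx.1 k
      _ ≤ V x := mul_le_of_le_one_left (hVnonneg x) (pow_le_one₀ hθ0 hθ1.le)
      _ < ε := hVx.2
  · obtain ⟨r, hr, hVr⟩ := hsmall hδ
    refine ⟨r, hr, fun x hx ↦ ?_⟩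
    rw [tendsto_zero_iff_norm_tendsto_zero]
    refine squeeze_zero (fun k ↦ norm_nonneg _) (hbound (hVr x hx)) ?_
    simpa using (tendsto_pow_atTop_nhds_zero_of_lt_one hθ0 hθ1).mul_const (V x)

theorem exists_pow_norm_lt_one {R : Type*} [SeminormedRing R] {a : R} {c ρ : ℝ} (hρ0 : 0 ≤ ρ)
    (hρ1 : ρ < 1) (h : ∀ k : ℕ, ‖a ^ k‖ ≤ c * ρ ^ k) : ∃ m, 0 < m ∧ ‖a ^ m‖ < 1 := by
  have hlim : Tendsto (fun k : ℕ ↦ c * ρ ^ k) atTop (𝓝 0) := by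
    simpa using (tendsto_pow_atTop_nhds_zero_of_lt_one hρ0 hρ1).const_mul c
  obtain ⟨m, hm, hlt⟩ :=
    ((eventually_gt_atTop 0).and (hlim.eventually (gt_mem_nhds one_pos))).exists
  exact ⟨m, hm, (h m).trans_lt hlt⟩

theorem stmt_0_general (n : ℕ)
    (f : EuclideanSpace ℝ (Fin n) → EuclideanSpace ℝ (Fin n))
    (hf0 : f 0 = 0)
    (A : EuclideanSpace ℝ (Fin n) →L[ℝ] EuclideanSpace ℝ (Fin n))
    (hA : HasFDerivAt f A 0)
    (c ρ : ℝ) (hρ : ρ ∈ Set.Ioo (0 : ℝ) 1)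
    (hAk : ∀ k : ℕ, ‖A ^ k‖ ≤ c * ρ ^ k) :
    (∀ ε > 0, ∃ δ > 0, ∀ x : EuclideanSpace ℝ (Fin n), ‖x‖ < δ →
      ∀ k : ℕ, ‖f^[k] x‖ < ε) ∧
    (∃ r > 0, ∀ x : EuclideanSpace ℝ (Fin n), ‖x‖ < r →
      Tendsto (fun k => f^[k] x) atTop (𝓝 0)) := by
  obtain ⟨m, hm, hAm⟩ := exists_pow_norm_lt_one hρ.1.le hρ.2 hAk
  obtain ⟨θ, hθ0, hθ1, hdecay⟩ := hA.exists_adaptedNorm_contraction hf0 hAm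
  exact asymptoticStability_of_lyapunov (A.norm_le_adaptedNorm hm) (A.tendsto_adaptedNorm_zero m)
    hθ0 hθ1 hdecay

/-- Under the stated hypotheses, `0` is an asymptotically stable fixed point of
the discrete dynamical system `x_{k+1} = f (x_k)`: stability plus local attractivity. -/
theorem stmt_0 (n : ℕ) (hn : 1 ≤ n)
    (Ω : Set (EuclideanSpace ℝ (Fin n))) (hΩ : IsOpen Ω)
    (h0Ω : (0 : EuclideanSpace ℝ (Fin n)) ∈ Ω)
    (f : EuclideanSpace ℝ (Fin n) → EuclideanSpace ℝ (Fin n))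
    (hf : AnalyticOn ℝ f Ω) (hmaps : Set.MapsTo f Ω Ω) (hf0 : f 0 = 0)
    (A : EuclideanSpace ℝ (Fin n) →L[ℝ] EuclideanSpace ℝ (Fin n))
    (hA : HasFDerivAt f A 0)
    (c ρ : ℝ) (hc : 1 ≤ c) (hρ : ρ ∈ Set.Ioo (0 : ℝ) 1)
    (hAk : ∀ k : ℕ, ‖A ^ k‖ ≤ c * ρ ^ k) :
    (∀ ε > 0, ∃ δ > 0, ∀ x : EuclideanSpace ℝ (Fin n), ‖x‖ < δ →
      ∀ k : ℕ, ‖f^[k] x‖ < ε) ∧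
    (∃ r > 0, ∀ x : EuclideanSpace ℝ (Fin n), ‖x‖ < r →
      Tendsto (fun k => f^[k] x) atTop (𝓝 0)) :=
  stmt_0_general n f hf0 A hA c ρ hρ hAk
end

section
/- Under the stated hypotheses, orbits in the domain of attraction decay eventually exponentially: there exist C ≥ 1 and α ∈ (0,1) such that for every x ∈ DA(0) there exists N = N(x) ∈ ℕ with ‖f⁽ᵏ⁾(x)‖ ≤ C·‖f⁽ᴺ⁾(x)‖·α^{k−N} for all k ≥ N. -/
/-!
Choose `ρ < α < 1`. Since `‖A ^ m‖ ≤ c ρ ^ m < α ^ m` for some `m ≥ 1`, the derivative of `f^[m]`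
at `0` shows that `f^[m]` contracts a small ball around `0` by the factor `α ^ m`, while the
iterates `f^[s]`, `s < m`, grow by at most `(c + 1) α ^ s` there. Cutting an orbit into blocks
of length `m` gives `‖f^[j] z‖ ≤ (c + 1) α ^ j ‖z‖` on that ball, and an orbit converging to `0`
enters the ball after finitely many steps `N`.
-/

open Filter Topology Function Set Metric

section Dynamics

variable {E : Type*} [SeminormedAddCommGroup E]

theorem norm_iterate_le_of_contracting_iterate {g : E → E} {S : Set E} {m : ℕ} (hm : 0 < m)
    {K α : ℝ} (hK : 0 ≤ K) (hα : 0 ≤ α) (hmaps : MapsTo g^[m] S S)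
    (hcontr : ∀ z ∈ S, ‖g^[m] z‖ ≤ α ^ m * ‖z‖)
    (hinit : ∀ z ∈ S, ∀ s < m, ‖g^[s] z‖ ≤ K * α ^ s * ‖z‖) (j : ℕ) :
    ∀ z ∈ S, ‖g^[j] z‖ ≤ K * α ^ j * ‖z‖ := by
  induction j using Nat.strong_induction_on with
  | _ j ih =>
    intro z hz
    rcases lt_or_ge j m with hj | hj
    · exact hinit z hz j hj
    · obtain ⟨i, rfl⟩ := Nat.exists_eq_add_of_le' hj
      rw [iterate_add_apply]
      calc ‖g^[i] (g^[m] z)‖ ≤ K * α ^ i * ‖g^[m] z‖ := ih i (by omega) _ (hmaps hz)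
        _ ≤ K * α ^ i * (α ^ m * ‖z‖) := by gcongr; exact hcontr z hz
        _ = K * α ^ (i + m) * ‖z‖ := by ring

theorem exists_norm_iterate_le_of_tendsto {g : E → E} {C α : ℝ}
    (hdecay : ∀ᶠ z in 𝓝 0, ∀ j, ‖g^[j] z‖ ≤ C * α ^ j * ‖z‖) {x : E}
    (hx : Tendsto (fun k => g^[k] x) atTop (𝓝 0)) :
    ∃ N : ℕ, ∀ k ≥ N, ‖g^[k] x‖ ≤ C * ‖g^[N] x‖ * α ^ (k - N) := by
  obtain ⟨N, hN⟩ := eventually_atTop.1 (hx.eventually hdecay)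
  refine ⟨N, fun k hk => ?_⟩
  have := hN N le_rfl (k - N)
  rwa [← iterate_add_apply, Nat.sub_add_cancel hk, mul_right_comm] at this

end Dynamics

section Linearization

variable {𝕜 E F : Type*} [NontriviallyNormedField 𝕜] [NormedAddCommGroup E] [NormedSpace 𝕜 E]
  [NormedAddCommGroup F] [NormedSpace 𝕜 F]

theorem HasFDerivAt.eventually_norm_le_mul_norm {g : E → F} {B : E →L[𝕜] F}
    (hg : HasFDerivAt g B 0) (hg0 : g 0 = 0) {β : ℝ} (hβ : ‖B‖ < β) :
    ∀ᶠ z in 𝓝 0, ‖g z‖ ≤ β * ‖z‖ := by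
  filter_upwards [hg.isLittleO.def (sub_pos.2 hβ)] with z hz
  simp only [hg0, sub_zero] at hz
  calc ‖g z‖ ≤ ‖B z‖ + ‖g z - B z‖ := norm_le_norm_add_norm_sub' _ _
    _ ≤ ‖B‖ * ‖z‖ + (β - ‖B‖) * ‖z‖ := add_le_add (B.le_opNorm z) hz
    _ = β * ‖z‖ := by ring

theorem exists_mul_pow_lt_pow_of_lt {c ρ α : ℝ} (hρ : 0 ≤ ρ) (hρα : ρ < α) :
    ∃ m > 0, c * ρ ^ m < α ^ m := by
  have hα : 0 < α := hρ.trans_lt hρα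
  have hlim : Tendsto (fun m : ℕ => c * (ρ / α) ^ m) atTop (𝓝 0) := by
    simpa using (tendsto_pow_atTop_nhds_zero_of_lt_one (div_nonneg hρ hα.le)
      ((div_lt_one hα).2 hρα)).const_mul c
  obtain ⟨m, hm0, hm⟩ := ((eventually_gt_atTop 0).and (hlim.eventually_lt_const one_pos)).exists
  refine ⟨m, hm0, ?_⟩
  calc c * ρ ^ m = c * (ρ / α) ^ m * α ^ m := by rw [div_pow]; field_simp
    _ < 1 * α ^ m := by gcongr
    _ = α ^ m := one_mul _

theorem HasFDerivAt.eventually_norm_iterate_le {f : E → E} {A : E →L[𝕜] E}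
    (hA : HasFDerivAt f A 0) (hf0 : f 0 = 0) {c ρ α : ℝ} (hc : 0 ≤ c) (hρ : 0 ≤ ρ)
    (hρα : ρ < α) (hα : α ≤ 1) (hAk : ∀ k : ℕ, ‖A ^ k‖ ≤ c * ρ ^ k) :
    ∀ᶠ z in 𝓝 0, ∀ j, ‖f^[j] z‖ ≤ (c + 1) * α ^ j * ‖z‖ := by
  have hα0 : 0 < α := hρ.trans_lt hρα
  obtain ⟨m, hm0, hm⟩ := exists_mul_pow_lt_pow_of_lt (c := c) hρ hρα
  have hiter (k : ℕ) : HasFDerivAt f^[k] (A ^ k) 0 := hA.iterate hf0 k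
  have hfix (k : ℕ) : f^[k] 0 = 0 := iterate_fixed hf0 k
  have hcontr : ∀ᶠ z in 𝓝 0, ‖f^[m] z‖ ≤ α ^ m * ‖z‖ :=
    (hiter m).eventually_norm_le_mul_norm (hfix m) ((hAk m).trans_lt hm)
  have hinit : ∀ᶠ z in 𝓝 0, ∀ s ∈ Iio m, ‖f^[s] z‖ ≤ (c + 1) * α ^ s * ‖z‖ := by
    refine (eventually_all_finite (finite_Iio m)).2 fun s _ =>
      (hiter s).eventually_norm_le_mul_norm (hfix s) ?_
    calc ‖A ^ s‖ ≤ c * ρ ^ s := hAk s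
      _ ≤ c * α ^ s := by gcongr
      _ < (c + 1) * α ^ s := by gcongr; linarith
  obtain ⟨r, hr, hball⟩ := eventually_nhds_iff_ball.1 (hcontr.and hinit)
  have hmaps : MapsTo f^[m] (ball 0 r) (ball 0 r) := fun z hz => by
    rw [mem_ball_zero_iff] at hz ⊢
    calc ‖f^[m] z‖ ≤ α ^ m * ‖z‖ := (hball z (mem_ball_zero_iff.2 hz)).1
      _ ≤ 1 * ‖z‖ := by gcongr; exact pow_le_one₀ hα0.le hα
      _ < r := by rwa [one_mul]
  filter_upwards [ball_mem_nhds 0 hr] with z hz j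
  exact norm_iterate_le_of_contracting_iterate hm0 (by linarith) hα0.le hmaps
    (fun z hz => (hball z hz).1) (fun z hz => (hball z hz).2) j z hz

end Linearization

theorem stmt_3_general (n : ℕ)
    (Ω : Set (EuclideanSpace ℝ (Fin n)))
    (f : EuclideanSpace ℝ (Fin n) → EuclideanSpace ℝ (Fin n))
    (hf0 : f 0 = 0)
    (A : EuclideanSpace ℝ (Fin n) →L[ℝ] EuclideanSpace ℝ (Fin n))
    (hA : HasFDerivAt f A 0)
    (c ρ : ℝ) (hc : 1 ≤ c) (hρ : ρ ∈ Set.Ioo (0 : ℝ) 1)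
    (hAk : ∀ k : ℕ, ‖A ^ k‖ ≤ c * ρ ^ k) :
    ∃ C ≥ (1 : ℝ), ∃ α ∈ Set.Ioo (0 : ℝ) 1,
      ∀ x ∈ {x ∈ Ω | Tendsto (fun k => f^[k] x) atTop (𝓝 0)},
        ∃ N : ℕ, ∀ k ≥ N, ‖f^[k] x‖ ≤ C * ‖f^[N] x‖ * α ^ (k - N) := by
  obtain ⟨hρ0, hρ1⟩ := hρ
  refine ⟨c + 1, by linarith, (1 + ρ) / 2, ⟨by positivity, by linarith⟩, fun x hx => ?_⟩
  exact exists_norm_iterate_le_of_tendsto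
    (hA.eventually_norm_iterate_le hf0 (by linarith) hρ0.le (by linarith) (by linarith) hAk) hx.2

/-- orbits in the domain of attraction decay eventually exponentially. -/
theorem stmt_3 (n : ℕ) (hn : 1 ≤ n)
    (Ω : Set (EuclideanSpace ℝ (Fin n))) (hΩ : IsOpen Ω)
    (h0Ω : (0 : EuclideanSpace ℝ (Fin n)) ∈ Ω)
    (f : EuclideanSpace ℝ (Fin n) → EuclideanSpace ℝ (Fin n))
    (hf : AnalyticOn ℝ f Ω) (hmaps : Set.MapsTo f Ω Ω) (hf0 : f 0 = 0)
    (A : EuclideanSpace ℝ (Fin n) →L[ℝ] EuclideanSpace ℝ (Fin n))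
    (hA : HasFDerivAt f A 0)
    (c ρ : ℝ) (hc : 1 ≤ c) (hρ : ρ ∈ Set.Ioo (0 : ℝ) 1)
    (hAk : ∀ k : ℕ, ‖A ^ k‖ ≤ c * ρ ^ k) :
    ∃ C ≥ (1 : ℝ), ∃ α ∈ Set.Ioo (0 : ℝ) 1,
      ∀ x ∈ {x ∈ Ω | Tendsto (fun k => f^[k] x) atTop (𝓝 0)},
        ∃ N : ℕ, ∀ k ≥ N, ‖f^[k] x‖ ≤ C * ‖f^[N] x‖ * α ^ (k - N) :=
  stmt_3_general n Ω f hf0 A hA c ρ hc hρ hAk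
end

section
/- Under the stated hypotheses, for every x ∈ Ω the following equivalence holds: x ∈ DA(0) if and only if the series ∑_{k=0}^∞ ‖f⁽ᵏ⁾(x)‖² converges (i.e., is summable). -/
/-!
Since `‖Aᵏ‖ ≤ c ρᵏ → 0`, some power satisfies `‖Aᵐ‖ < 1`, so `f⁽ᵐ⁾`, whose derivative at the fixed
point `0` is `Aᵐ`, contracts a neighbourhood of `0` by a factor `q < 1`. An orbit converging to `0`
eventually stays in that neighbourhood, hence `‖f⁽ᵐ⁺ᵏ⁾(x)‖² ≤ q² ‖f⁽ᵏ⁾(x)‖²` for large `k`, and a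
nonnegative sequence with this property has bounded partial sums. Conversely, the terms of a
convergent series tend to `0`.
-/

open Filter Topology Finset

theorem summable_of_le_mul_add {u : ℕ → ℝ} {m : ℕ} {q : ℝ} (hu : ∀ k, 0 ≤ u k) (hq0 : 0 ≤ q)
    (hq1 : q < 1) (h : ∀ k, u (m + k) ≤ q * u k) : Summable u := by
  set P := ∑ i ∈ range m, u i
  refine summable_of_sum_range_le hu (c := P / (1 - q)) fun K => ?_
  have hmono : ∑ i ∈ range K, u i ≤ ∑ i ∈ range (m + K), u i :=
    sum_le_sum_of_subset_of_nonneg (range_mono (by omega)) fun i _ _ => hu i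
  have hsplit : ∑ i ∈ range (m + K), u i ≤ P + q * ∑ i ∈ range (m + K), u i :=
    calc ∑ i ∈ range (m + K), u i = P + ∑ i ∈ range K, u (m + i) := sum_range_add u m K
      _ ≤ P + q * ∑ i ∈ range K, u i := by rw [mul_sum]; gcongr with i; exact h i
      _ ≤ P + q * ∑ i ∈ range (m + K), u i := by gcongr
  rw [le_div_iff₀ (sub_pos.2 hq1)]
  nlinarith

theorem summable_of_eventually_le_mul_add {u : ℕ → ℝ} {m : ℕ} {q : ℝ} (hu : ∀ k, 0 ≤ u k)
    (hq0 : 0 ≤ q) (hq1 : q < 1) (h : ∀ᶠ k in atTop, u (m + k) ≤ q * u k) : Summable u := by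
  obtain ⟨N, hN⟩ := eventually_atTop.1 h
  rw [← summable_nat_add_iff N]
  refine summable_of_le_mul_add (m := m) (fun k => hu _) hq0 hq1 fun k => ?_
  simpa only [add_assoc] using hN (k + N) (Nat.le_add_left N k)

section Iterates

variable {𝕜 E F : Type*} [NontriviallyNormedField 𝕜] [NormedAddCommGroup E] [NormedSpace 𝕜 E]
  [NormedAddCommGroup F] [NormedSpace 𝕜 F]

theorem HasFDerivAt.eventually_norm_le_mul {φ : E → F} {B : E →L[𝕜] F} (hφ : HasFDerivAt φ B 0)
    (h0 : φ 0 = 0) {q : ℝ} (hq : ‖B‖ < q) : ∀ᶠ z in 𝓝 0, ‖φ z‖ ≤ q * ‖z‖ := by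
  have hlin := hφ.isLittleO
  simp only [h0, sub_zero] at hlin
  filter_upwards [hlin.def (sub_pos.2 hq)] with z hz
  calc ‖φ z‖ ≤ ‖φ z - B z‖ + ‖B z‖ := norm_le_norm_sub_add _ _
    _ ≤ (q - ‖B‖) * ‖z‖ + ‖B‖ * ‖z‖ := add_le_add hz (B.le_opNorm z)
    _ = q * ‖z‖ := by ring

theorem summable_norm_iterate_sq_of_tendsto {f : E → E} {A : E →L[𝕜] E} (hf0 : f 0 = 0)
    (hA : HasFDerivAt f A 0) {m : ℕ} (hm : ‖A ^ m‖ < 1) {x : E}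
    (hx : Tendsto (fun k => f^[k] x) atTop (𝓝 0)) : Summable fun k => ‖f^[k] x‖ ^ 2 := by
  obtain ⟨q, hAq, hq1⟩ := exists_between hm
  have hq0 : 0 ≤ q := (norm_nonneg _).trans hAq.le
  have hcontract := (hA.iterate hf0 m).eventually_norm_le_mul (Function.iterate_fixed hf0 m) hAq
  refine summable_of_eventually_le_mul_add (m := m) (q := q ^ 2) (fun _ => by positivity)
    (by positivity) (pow_lt_one₀ hq0 hq1 two_ne_zero) ?_
  filter_upwards [hx.eventually hcontract] with k hk
  rw [Function.iterate_add_apply, ← mul_pow]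
  gcongr

end Iterates

theorem tendsto_zero_of_summable_norm_sq {E : Type*} [SeminormedAddCommGroup E] {u : ℕ → E}
    (h : Summable fun k => ‖u k‖ ^ 2) : Tendsto u atTop (𝓝 0) := by
  refine tendsto_zero_iff_norm_tendsto_zero.2 ?_
  simpa [Real.sqrt_sq (norm_nonneg _)] using h.tendsto_atTop_zero.sqrt

theorem stmt_4_general (n : ℕ)
    (Ω : Set (EuclideanSpace ℝ (Fin n)))
    (f : EuclideanSpace ℝ (Fin n) → EuclideanSpace ℝ (Fin n))
    (hf0 : f 0 = 0)
    (A : EuclideanSpace ℝ (Fin n) →L[ℝ] EuclideanSpace ℝ (Fin n))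
    (hA : HasFDerivAt f A 0)
    (c ρ : ℝ) (hρ : ρ ∈ Set.Ioo (0 : ℝ) 1)
    (hAk : ∀ k : ℕ, ‖A ^ k‖ ≤ c * ρ ^ k) :
    ∀ x ∈ Ω, (Tendsto (fun k => f^[k] x) atTop (𝓝 0) ↔
      Summable (fun k : ℕ => ‖f^[k] x‖ ^ 2)) := by
  intro x _
  have hpow : Tendsto (fun k => ‖A ^ k‖) atTop (𝓝 0) :=
    squeeze_zero (fun _ => norm_nonneg _) hAk <| by
      simpa using (tendsto_pow_atTop_nhds_zero_of_lt_one hρ.1.le hρ.2).const_mul c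
  obtain ⟨m, hm⟩ := (hpow.eventually (gt_mem_nhds one_pos)).exists
  exact ⟨summable_norm_iterate_sq_of_tendsto hf0 hA hm, tendsto_zero_of_summable_norm_sq⟩

/-- for every `x ∈ Ω`, `x ∈ DA(0)` iff `∑ ‖f⁽ᵏ⁾(x)‖²` is summable. -/
theorem stmt_4 (n : ℕ) (hn : 1 ≤ n)
    (Ω : Set (EuclideanSpace ℝ (Fin n))) (hΩ : IsOpen Ω)
    (h0Ω : (0 : EuclideanSpace ℝ (Fin n)) ∈ Ω)
    (f : EuclideanSpace ℝ (Fin n) → EuclideanSpace ℝ (Fin n))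
    (hf : AnalyticOn ℝ f Ω) (hmaps : Set.MapsTo f Ω Ω) (hf0 : f 0 = 0)
    (A : EuclideanSpace ℝ (Fin n) →L[ℝ] EuclideanSpace ℝ (Fin n))
    (hA : HasFDerivAt f A 0)
    (c ρ : ℝ) (hc : 1 ≤ c) (hρ : ρ ∈ Set.Ioo (0 : ℝ) 1)
    (hAk : ∀ k : ℕ, ‖A ^ k‖ ≤ c * ρ ^ k) :
    ∀ x ∈ Ω, (Tendsto (fun k => f^[k] x) atTop (𝓝 0) ↔
      Summable (fun k : ℕ => ‖f^[k] x‖ ^ 2)) :=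
  stmt_4_general n Ω f hf0 A hA c ρ hρ hAk
end

section
/- Under the stated hypotheses, the function V defined on DA(0) by V(x) = ∑_{k=0}^∞ ‖f⁽ᵏ⁾(x)‖² is well defined (the series converges for every x ∈ DA(0)) and satisfies: V(0) = 0; V(f(x)) − V(x) = −‖x‖² for every x ∈ DA(0); and V(x) > 0 for every x ∈ DA(0) with x ≠ 0. -/
/-!
Pick `m` with `‖A ^ m‖ < θ < 1`. Since `Aᵐ` is the derivative of `f⁽ᵐ⁾` at the fixed point `0`,
`‖f⁽ᵐ⁾ y‖ ≤ θ ‖y‖` near `0`, so along an orbit converging to `0` the squared norms eventually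
satisfy `a (k + m) ≤ θ² a k`, which forces summability. The remaining claims are the shift
identity `V x = ‖x‖² + V (f x)` and positivity of the first term.
-/

open Filter Topology Finset

theorem summable_of_add_le_mul {a : ℕ → ℝ} {m : ℕ} {θ : ℝ} (ha : ∀ k, 0 ≤ a k) (hθ₀ : 0 ≤ θ)
    (hθ : θ < 1) (h : ∀ k, a (k + m) ≤ θ * a k) : Summable a := by
  set B := ∑ i ∈ range m, a i
  refine summable_of_sum_range_le (c := B / (1 - θ)) ha fun n => ?_
  have hmono : ∑ i ∈ range n, a i ≤ ∑ i ∈ range (m + n), a i :=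
    sum_le_sum_of_subset_of_nonneg (range_mono (by omega)) fun i _ _ => ha i
  have hstep : ∑ i ∈ range (m + n), a i ≤ B + θ * ∑ i ∈ range (m + n), a i :=
    calc ∑ i ∈ range (m + n), a i = B + ∑ i ∈ range n, a (m + i) := sum_range_add _ _ _
      _ ≤ B + θ * ∑ i ∈ range n, a i := by
        rw [mul_sum]
        gcongr with i
        rw [add_comm]
        exact h i
      _ ≤ B + θ * ∑ i ∈ range (m + n), a i := by gcongr
  rw [le_div_iff₀ (by linarith)]
  nlinarith

theorem summable_of_eventually_add_le_mul {a : ℕ → ℝ} {m : ℕ} {θ : ℝ} (ha : ∀ k, 0 ≤ a k)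
    (hθ₀ : 0 ≤ θ) (hθ : θ < 1) (h : ∀ᶠ k in atTop, a (k + m) ≤ θ * a k) : Summable a := by
  obtain ⟨N, hN⟩ := eventually_atTop.1 h
  refine (summable_nat_add_iff N).1
    (summable_of_add_le_mul (m := m) (fun k => ha _) hθ₀ hθ fun k => ?_)
  simpa only [add_right_comm] using hN (k + N) (by omega)

section Normed

variable {E F : Type*} [NormedAddCommGroup E] [NormedSpace ℝ E] [NormedAddCommGroup F]
  [NormedSpace ℝ F]

theorem HasFDerivAt.eventually_norm_sub_le {g : E → F} {B : E →L[ℝ] F} {x : E} {r : ℝ}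
    (hg : HasFDerivAt g B x) (hr : ‖B‖ < r) :
    ∀ᶠ y in 𝓝 x, ‖g y - g x‖ ≤ r * ‖y - x‖ := by
  filter_upwards [hg.isLittleO.bound (sub_pos.2 hr)] with y hy
  calc ‖g y - g x‖ ≤ ‖B (y - x)‖ + ‖g y - g x - B (y - x)‖ := norm_le_norm_add_norm_sub' _ _
    _ ≤ ‖B‖ * ‖y - x‖ + (r - ‖B‖) * ‖y - x‖ := add_le_add (B.le_opNorm _) hy
    _ = r * ‖y - x‖ := by ring

theorem summable_pow_norm_iterate {f : E → E} {A : E →L[ℝ] E} {x : E} {m p : ℕ}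
    (hf0 : f 0 = 0) (hA : HasFDerivAt f A 0) (hAm : ‖A ^ m‖ < 1) (hp : p ≠ 0)
    (hx : Tendsto (fun k => f^[k] x) atTop (𝓝 0)) :
    Summable fun k => ‖f^[k] x‖ ^ p := by
  obtain ⟨θ, hAθ, hθ⟩ := exists_between hAm
  have hθ₀ : 0 ≤ θ := (norm_nonneg _).trans hAθ.le
  have hcontract : ∀ᶠ y in 𝓝 0, ‖f^[m] y‖ ≤ θ * ‖y‖ := by
    simpa only [Function.iterate_fixed hf0, sub_zero] using
      (hA.iterate hf0 m).eventually_norm_sub_le hAθ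
  refine summable_of_eventually_add_le_mul (m := m) (fun k => by positivity) (pow_nonneg hθ₀ p)
    (pow_lt_one₀ hθ₀ hθ hp) ?_
  filter_upwards [hx.eventually hcontract] with k hk
  rw [← mul_pow, add_comm, Function.iterate_add_apply]
  gcongr

end Normed

theorem tsum_iterate_apply_eq_sub {α : Type*} {f : α → α} {g : α → ℝ} {x : α}
    (hg : Summable fun k => g (f^[k] x)) :
    ∑' k, g (f^[k] (f x)) = ∑' k, g (f^[k] x) - g x := by
  simp only [hg.tsum_eq_zero_add, Function.iterate_succ_apply, Function.iterate_zero_apply]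
  ring

theorem stmt_5_general (n : ℕ)
    (Ω : Set (EuclideanSpace ℝ (Fin n)))
    (f : EuclideanSpace ℝ (Fin n) → EuclideanSpace ℝ (Fin n))
    (hf0 : f 0 = 0)
    (A : EuclideanSpace ℝ (Fin n) →L[ℝ] EuclideanSpace ℝ (Fin n))
    (hA : HasFDerivAt f A 0)
    (c ρ : ℝ) (hρ : ρ ∈ Set.Ioo (0 : ℝ) 1)
    (hAk : ∀ k : ℕ, ‖A ^ k‖ ≤ c * ρ ^ k) :
    (∀ x ∈ {x ∈ Ω | Tendsto (fun k => f^[k] x) atTop (𝓝 0)},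
        Summable (fun k : ℕ => ‖f^[k] x‖ ^ 2)) ∧
    (∑' k : ℕ, ‖f^[k] (0 : EuclideanSpace ℝ (Fin n))‖ ^ 2) = 0 ∧
    (∀ x ∈ {x ∈ Ω | Tendsto (fun k => f^[k] x) atTop (𝓝 0)},
        (∑' k : ℕ, ‖f^[k] (f x)‖ ^ 2) - (∑' k : ℕ, ‖f^[k] x‖ ^ 2) = -‖x‖ ^ 2) ∧
    (∀ x ∈ {x ∈ Ω | Tendsto (fun k => f^[k] x) atTop (𝓝 0)}, x ≠ 0 →
        0 < ∑' k : ℕ, ‖f^[k] x‖ ^ 2) := by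
  have hcρ : Tendsto (fun k => c * ρ ^ k) atTop (𝓝 0) := by
    simpa only [mul_zero] using (tendsto_pow_atTop_nhds_zero_of_lt_one hρ.1.le hρ.2).const_mul c
  obtain ⟨m, hm⟩ := (hcρ.eventually (gt_mem_nhds one_pos)).exists
  have hV : ∀ x ∈ {x ∈ Ω | Tendsto (fun k => f^[k] x) atTop (𝓝 0)},
      Summable fun k => ‖f^[k] x‖ ^ 2 := fun x hx =>
    summable_pow_norm_iterate hf0 hA ((hAk m).trans_lt hm) two_ne_zero hx.2
  refine ⟨hV, ?_, fun x hx => ?_, fun x hx hx0 => ?_⟩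
  · simp only [Function.iterate_fixed hf0, norm_zero, zero_pow two_ne_zero, tsum_zero]
  · rw [tsum_iterate_apply_eq_sub (g := fun y => ‖y‖ ^ 2) (hV x hx)]
    ring
  · exact (hV x hx).tsum_pos (fun k => by positivity) 0 (pow_pos (norm_pos_iff.2 hx0) 2)

/-- `V(x) = ∑' k, ‖f⁽ᵏ⁾(x)‖²` is well defined on `DA(0)`, vanishes at `0`,
satisfies `V(f(x)) − V(x) = −‖x‖²` on `DA(0)`, and is positive on `DA(0) \ {0}`. -/
theorem stmt_5 (n : ℕ) (hn : 1 ≤ n)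
    (Ω : Set (EuclideanSpace ℝ (Fin n))) (hΩ : IsOpen Ω)
    (h0Ω : (0 : EuclideanSpace ℝ (Fin n)) ∈ Ω)
    (f : EuclideanSpace ℝ (Fin n) → EuclideanSpace ℝ (Fin n))
    (hf : AnalyticOn ℝ f Ω) (hmaps : Set.MapsTo f Ω Ω) (hf0 : f 0 = 0)
    (A : EuclideanSpace ℝ (Fin n) →L[ℝ] EuclideanSpace ℝ (Fin n))
    (hA : HasFDerivAt f A 0)
    (c ρ : ℝ) (hc : 1 ≤ c) (hρ : ρ ∈ Set.Ioo (0 : ℝ) 1)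
    (hAk : ∀ k : ℕ, ‖A ^ k‖ ≤ c * ρ ^ k) :
    (∀ x ∈ {x ∈ Ω | Tendsto (fun k => f^[k] x) atTop (𝓝 0)},
        Summable (fun k : ℕ => ‖f^[k] x‖ ^ 2)) ∧
    (∑' k : ℕ, ‖f^[k] (0 : EuclideanSpace ℝ (Fin n))‖ ^ 2) = 0 ∧
    (∀ x ∈ {x ∈ Ω | Tendsto (fun k => f^[k] x) atTop (𝓝 0)},
        (∑' k : ℕ, ‖f^[k] (f x)‖ ^ 2) - (∑' k : ℕ, ‖f^[k] x‖ ^ 2) = -‖x‖ ^ 2) ∧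
    (∀ x ∈ {x ∈ Ω | Tendsto (fun k => f^[k] x) atTop (𝓝 0)}, x ≠ 0 →
        0 < ∑' k : ℕ, ‖f^[k] x‖ ^ 2) :=
  stmt_5_general n Ω f hf0 A hA c ρ hρ hAk
end

section
/- Under the stated hypotheses, the function V(x) = ∑_{k=0}^∞ ‖f⁽ᵏ⁾(x)‖² is the unique solution of the functional equation on DA(0) in the following sense: if W : E → ℝ is continuous at 0, W(0) = 0, and W(f(x)) − W(x) = −‖x‖² for every x ∈ DA(0), then W(x) = V(x) for every x ∈ DA(0). -/
/-! Telescoping: along an orbit in the basin of `0`, the functional equation makes the partial sums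
of `∑ ‖f⁽ᵏ⁾(x)‖²` equal to `W x - W (f⁽ᵐ⁾ x)`, and continuity of `W` at `0` with `W 0 = 0` sends the
second term to `0`. -/

open Filter Topology Set Function

theorem mapsTo_setOf_tendsto_iterate {X : Type*} [TopologicalSpace X] {f : X → X} {s : Set X}
    (hs : MapsTo f s s) (a : X) :
    MapsTo f {x ∈ s | Tendsto (fun k => f^[k] x) atTop (𝓝 a)}
      {x ∈ s | Tendsto (fun k => f^[k] x) atTop (𝓝 a)} := fun x hx =>
  ⟨hs hx.1, by simpa only [comp_def, iterate_succ_apply] using hx.2.comp (tendsto_add_atTop_nat 1)⟩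

section Telescoping

variable {X : Type*} {f : X → X} {s : Set X} {x : X}

theorem sum_range_iterate_eq_sub {G : Type*} [AddCommGroup G] {W g : X → G}
    (hs : MapsTo f s s) (hW : ∀ y ∈ s, W y - W (f y) = g y) (hx : x ∈ s) (m : ℕ) :
    ∑ k ∈ Finset.range m, g (f^[k] x) = W x - W (f^[m] x) := by
  calc ∑ k ∈ Finset.range m, g (f^[k] x)
      = ∑ k ∈ Finset.range m, (W (f^[k] x) - W (f^[k + 1] x)) :=
        Finset.sum_congr rfl fun k _ => by rw [iterate_succ_apply', hW _ (hs.iterate k hx)]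
    _ = W x - W (f^[m] x) := Finset.sum_range_sub' (fun k => W (f^[k] x)) m

theorem hasSum_iterate_of_sub_eq [TopologicalSpace X] {W g : X → ℝ} {a : X}
    (hs : MapsTo f s s) (hW : ∀ y ∈ s, W y - W (f y) = g y) (hg : ∀ y ∈ s, 0 ≤ g y)
    (hWa : ContinuousAt W a) (hWa0 : W a = 0) (hx : x ∈ s)
    (hlim : Tendsto (fun k => f^[k] x) atTop (𝓝 a)) :
    HasSum (fun k => g (f^[k] x)) (W x) := by
  have hWlim : Tendsto (fun m => W (f^[m] x)) atTop (𝓝 0) := hWa0 ▸ hWa.tendsto.comp hlim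
  refine (hasSum_iff_tendsto_nat_of_nonneg (fun k => hg _ (hs.iterate k hx)) _).mpr ?_
  simp only [sum_range_iterate_eq_sub hs hW hx]
  simpa using tendsto_const_nhds.sub hWlim

end Telescoping

theorem stmt_7_general (n : ℕ)
    (Ω : Set (EuclideanSpace ℝ (Fin n)))
    (f : EuclideanSpace ℝ (Fin n) → EuclideanSpace ℝ (Fin n))
    (hmaps : Set.MapsTo f Ω Ω)
    (W : EuclideanSpace ℝ (Fin n) → ℝ) (hWcont : ContinuousAt W 0) (hW0 : W 0 = 0)
    (hWeq : ∀ x ∈ {x ∈ Ω | Tendsto (fun k => f^[k] x) atTop (𝓝 0)},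
        W (f x) - W x = -‖x‖ ^ 2) :
    ∀ x ∈ {x ∈ Ω | Tendsto (fun k => f^[k] x) atTop (𝓝 0)},
      W x = ∑' k : ℕ, ‖f^[k] x‖ ^ 2 := by
  intro x hx
  have hW : ∀ y ∈ {x ∈ Ω | Tendsto (fun k => f^[k] x) atTop (𝓝 0)}, W y - W (f y) = ‖y‖ ^ 2 :=
    fun y hy => by linarith [hWeq y hy]
  exact (hasSum_iterate_of_sub_eq (mapsTo_setOf_tendsto_iterate hmaps 0) hW
    (fun y _ => by positivity) hWcont hW0 hx hx.2).tsum_eq.symm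

/-- `V` is the unique solution of the functional equation on `DA(0)`. -/
theorem stmt_7 (n : ℕ) (hn : 1 ≤ n)
    (Ω : Set (EuclideanSpace ℝ (Fin n))) (hΩ : IsOpen Ω)
    (h0Ω : (0 : EuclideanSpace ℝ (Fin n)) ∈ Ω)
    (f : EuclideanSpace ℝ (Fin n) → EuclideanSpace ℝ (Fin n))
    (hf : AnalyticOn ℝ f Ω) (hmaps : Set.MapsTo f Ω Ω) (hf0 : f 0 = 0)
    (A : EuclideanSpace ℝ (Fin n) →L[ℝ] EuclideanSpace ℝ (Fin n))
    (hA : HasFDerivAt f A 0)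
    (c ρ : ℝ) (hc : 1 ≤ c) (hρ : ρ ∈ Set.Ioo (0 : ℝ) 1)
    (hAk : ∀ k : ℕ, ‖A ^ k‖ ≤ c * ρ ^ k)
    (W : EuclideanSpace ℝ (Fin n) → ℝ) (hWcont : ContinuousAt W 0) (hW0 : W 0 = 0)
    (hWeq : ∀ x ∈ {x ∈ Ω | Tendsto (fun k => f^[k] x) atTop (𝓝 0)},
        W (f x) - W x = -‖x‖ ^ 2) :
    ∀ x ∈ {x ∈ Ω | Tendsto (fun k => f^[k] x) atTop (𝓝 0)},
      W x = ∑' k : ℕ, ‖f^[k] x‖ ^ 2 :=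
  stmt_7_general n Ω f hmaps W hWcont hW0 hWeq
end

section
/- Under the stated hypotheses, if x⁰ lies in the topological boundary (frontier) of DA(0) and x⁰ ∈ Ω, then the orbit of x⁰ stays bounded away from 0: there exists r > 0 such that ‖f⁽ᵏ⁾(x⁰)‖ ≥ r for all k ∈ ℕ. -/
/-!
Since `‖A ^ m‖ ≤ c ρ ^ m < 1` for some `m > 0`, the iterate `f^[m]` is a contraction
`‖f^[m] x‖ ≤ q ‖x‖` on a small ball around `0`, so every point of that ball is attracted to `0`.
By continuity of the iterates, the basin `{x ∈ Ω | f^[k] x → 0}` is then open. A frontier point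
of an open set lies outside it, so the orbit of `x0` never enters the ball.
-/

open Filter Topology Metric

theorem Filter.Tendsto.of_comp_mul_add {α : Type*} {u : ℕ → α} {l : Filter α} {m : ℕ}
    (hm : 0 < m) (h : ∀ r < m, Tendsto (fun q => u (m * q + r)) atTop l) :
    Tendsto u atTop l := by
  intro s hs
  obtain ⟨Q, hQ⟩ := eventually_atTop.1 <|
    (Set.finite_lt_nat m).eventually_all.2 fun r hr => h r hr hs
  refine mem_map.2 (mem_atTop_sets.2 ⟨m * Q, fun k hk => ?_⟩)
  rw [← Nat.div_add_mod k m]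
  exact hQ (k / m) ((Nat.le_div_iff_mul_le hm).2 (by linarith [mul_comm m Q])) _
    (Nat.mod_lt k hm)

theorem tendsto_iterate_iterate_apply_iff {α : Type*} {f : α → α} {l : Filter α} (k : ℕ) (x : α) :
    Tendsto (fun j => f^[j] (f^[k] x)) atTop l ↔ Tendsto (fun j => f^[j] x) atTop l := by
  simp_rw [← Function.iterate_add_apply]
  exact tendsto_add_atTop_iff_nat (f := fun j => f^[j] x) k

theorem isOpen_setOf_tendsto_iterate {X : Type*} [TopologicalSpace X] {Ω : Set X} {f : X → X}
    {p : X} (hΩ : IsOpen Ω) (hf : ContinuousOn f Ω) (hmaps : Set.MapsTo f Ω Ω)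
    (hp : ∀ᶠ x in 𝓝 p, Tendsto (fun k => f^[k] x) atTop (𝓝 p)) :
    IsOpen {x ∈ Ω | Tendsto (fun k => f^[k] x) atTop (𝓝 p)} := by
  refine isOpen_iff_mem_nhds.2 fun x ⟨hxΩ, hx⟩ => ?_
  obtain ⟨k, hk⟩ := (hx.eventually hp.eventually_nhds).exists
  have hcont : ContinuousAt f^[k] x := (hf.iterate hmaps k).continuousAt (hΩ.mem_nhds hxΩ)
  filter_upwards [hΩ.mem_nhds hxΩ, hcont.eventually hk] with y hyΩ hy
  exact ⟨hyΩ, (tendsto_iterate_iterate_apply_iff k y).1 hy⟩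

section
variable {𝕜 E : Type*} [NontriviallyNormedField 𝕜] [NormedAddCommGroup E] [NormedSpace 𝕜 E]

theorem HasFDerivAt.eventually_norm_le {g : E → E} {L : E →L[𝕜] E} {q : ℝ}
    (hg : HasFDerivAt g L 0) (hg0 : g 0 = 0) (hq : ‖L‖ < q) :
    ∀ᶠ x in 𝓝 0, ‖g x‖ ≤ q * ‖x‖ := by
  filter_upwards [hg.isLittleO.def (sub_pos.2 hq)] with x hx
  simp only [hg0, sub_zero] at hx
  calc ‖g x‖ = ‖L x + (g x - L x)‖ := by rw [add_sub_cancel]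
    _ ≤ ‖L‖ * ‖x‖ + (q - ‖L‖) * ‖x‖ := norm_add_le_of_le (L.le_opNorm x) hx
    _ = q * ‖x‖ := by ring

theorem tendsto_iterate_zero_of_norm_le {g : E → E} {q δ : ℝ} (hq0 : 0 ≤ q) (hq1 : q < 1)
    (hg : ∀ x ∈ ball (0 : E) δ, ‖g x‖ ≤ q * ‖x‖) {x : E} (hx : x ∈ ball (0 : E) δ) :
    Tendsto (fun k => g^[k] x) atTop (𝓝 0) := by
  have hbound : ∀ k, ‖g^[k] x‖ ≤ q ^ k * ‖x‖ := by
    intro k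
    induction k with
    | zero => simp
    | succ k ih =>
      have hk : g^[k] x ∈ ball (0 : E) δ := by
        rw [mem_ball_zero_iff] at hx ⊢
        exact ih.trans_lt <| (mul_le_of_le_one_left (norm_nonneg x)
          (pow_le_one₀ hq0 hq1.le)).trans_lt hx
      rw [Function.iterate_succ_apply', pow_succ', mul_assoc]
      exact (hg _ hk).trans (mul_le_mul_of_nonneg_left ih hq0)
  refine tendsto_zero_iff_norm_tendsto_zero.2 <| squeeze_zero (fun _ => norm_nonneg _) hbound ?_
  simpa using (tendsto_pow_atTop_nhds_zero_of_lt_one hq0 hq1).mul_const ‖x‖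

theorem HasFDerivAt.eventually_tendsto_iterate {f : E → E} {A : E →L[𝕜] E} {m : ℕ}
    (hA : HasFDerivAt f A 0) (hf0 : f 0 = 0) (hm : 0 < m) (hAm : ‖A ^ m‖ < 1) :
    ∀ᶠ x in 𝓝 0, Tendsto (fun k => f^[k] x) atTop (𝓝 0) := by
  have hq : ‖A ^ m‖ < (‖A ^ m‖ + 1) / 2 := by linarith
  obtain ⟨δ, hδ, hcontr⟩ := eventually_nhds_iff_ball.1
    ((hA.iterate hf0 m).eventually_norm_le (Function.iterate_fixed hf0 m) hq)
  filter_upwards [ball_mem_nhds 0 hδ] with x hx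
  refine Tendsto.of_comp_mul_add hm fun r _ => ?_
  have hcont : Tendsto f^[r] (𝓝 0) (𝓝 0) := by
    simpa only [Function.iterate_fixed hf0 r] using (hA.iterate hf0 r).continuousAt.tendsto
  simp_rw [add_comm _ r, Function.iterate_add_apply, Function.iterate_mul]
  exact hcont.comp <| tendsto_iterate_zero_of_norm_le (by positivity) (by linarith) hcontr hx

end

theorem stmt_8_general (n : ℕ)
    (Ω : Set (EuclideanSpace ℝ (Fin n))) (hΩ : IsOpen Ω)
    (f : EuclideanSpace ℝ (Fin n) → EuclideanSpace ℝ (Fin n))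
    (hf : AnalyticOn ℝ f Ω) (hmaps : Set.MapsTo f Ω Ω) (hf0 : f 0 = 0)
    (A : EuclideanSpace ℝ (Fin n) →L[ℝ] EuclideanSpace ℝ (Fin n))
    (hA : HasFDerivAt f A 0)
    (c ρ : ℝ) (hρ : ρ ∈ Set.Ioo (0 : ℝ) 1)
    (hAk : ∀ k : ℕ, ‖A ^ k‖ ≤ c * ρ ^ k)
    (x0 : EuclideanSpace ℝ (Fin n))
    (hx0 : x0 ∈ frontier {x ∈ Ω | Tendsto (fun k => f^[k] x) atTop (𝓝 0)})
    (hx0Ω : x0 ∈ Ω) :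
    ∃ r > 0, ∀ k : ℕ, r ≤ ‖f^[k] x0‖ := by
  obtain ⟨m, hAm, hm⟩ : ∃ m, c * ρ ^ m < 1 ∧ 0 < m :=
    ((((tendsto_pow_atTop_nhds_zero_of_lt_one hρ.1.le hρ.2).const_mul c).eventually
      (gt_mem_nhds (by simp))).and (eventually_gt_atTop 0)).exists
  have hattr := hA.eventually_tendsto_iterate hf0 hm ((hAk m).trans_lt hAm)
  have hx0_not_mem : x0 ∉ {x ∈ Ω | Tendsto (fun k => f^[k] x) atTop (𝓝 0)} := by
    rw [(isOpen_setOf_tendsto_iterate hΩ hf.continuousOn hmaps hattr).frontier_eq] at hx0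
    exact hx0.2
  obtain ⟨δ, hδ, hball⟩ := eventually_nhds_iff_ball.1 hattr
  refine ⟨δ, hδ, fun k => not_lt.1 fun hk => hx0_not_mem ⟨hx0Ω, ?_⟩⟩
  exact (tendsto_iterate_iterate_apply_iff k x0).1 (hball _ (mem_ball_zero_iff.2 hk))

/-- the orbit of a boundary point of `DA(0)` stays bounded away from `0`. -/
theorem stmt_8 (n : ℕ) (hn : 1 ≤ n)
    (Ω : Set (EuclideanSpace ℝ (Fin n))) (hΩ : IsOpen Ω)
    (h0Ω : (0 : EuclideanSpace ℝ (Fin n)) ∈ Ω)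
    (f : EuclideanSpace ℝ (Fin n) → EuclideanSpace ℝ (Fin n))
    (hf : AnalyticOn ℝ f Ω) (hmaps : Set.MapsTo f Ω Ω) (hf0 : f 0 = 0)
    (A : EuclideanSpace ℝ (Fin n) →L[ℝ] EuclideanSpace ℝ (Fin n))
    (hA : HasFDerivAt f A 0)
    (c ρ : ℝ) (hc : 1 ≤ c) (hρ : ρ ∈ Set.Ioo (0 : ℝ) 1)
    (hAk : ∀ k : ℕ, ‖A ^ k‖ ≤ c * ρ ^ k)
    (x0 : EuclideanSpace ℝ (Fin n))
    (hx0 : x0 ∈ frontier {x ∈ Ω | Tendsto (fun k => f^[k] x) atTop (𝓝 0)})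
    (hx0Ω : x0 ∈ Ω) :
    ∃ r > 0, ∀ k : ℕ, r ≤ ‖f^[k] x0‖ :=
  stmt_8_general n Ω hΩ f hf hmaps hf0 A hA c ρ hρ hAk x0 hx0 hx0Ω
end

section
/- Under the stated hypotheses, the Lyapunov function V(x) = ∑_{k=0}^∞ ‖f⁽ᵏ⁾(x)‖² blows up at the boundary of the domain of attraction: if x⁰ ∈ frontier(DA(0)) and x⁰ ∈ Ω, then V(x) → +∞ as x → x⁰ within DA(0) (i.e., V tends to +∞ along the filter 𝓝[DA(0)] x⁰). -/
/-!
Along an adapted norm `N x = ∑ σ⁻¹ ^ k ‖A ^ k x‖` with `ρ < σ < 1` the linear part contracts,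
`N (A x) ≤ σ N x`, and since `f x - A x = o(x)` also `N (f x) ≤ θ N x` near `0` for some `θ < 1`.
Hence orbits entering a small ball decay geometrically: the basin of attraction is open and `V`
is finite on it. A boundary point `x₀ ∈ Ω` is therefore outside the basin, so its orbit does not
tend to `0` and the partial sums of `V` at `x₀` are unbounded; each partial sum is continuous at
`x₀` and bounds `V` from below on the basin.
-/

open Filter Topology Set

section AdaptedNorm

variable {E : Type*} [NormedAddCommGroup E] [NormedSpace ℝ E]

noncomputable def adaptedNorm (A : E →L[ℝ] E) (σ : ℝ) (x : E) : ℝ :=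
  ∑' k : ℕ, σ⁻¹ ^ k * ‖(A ^ k) x‖

variable {A : E →L[ℝ] E} {σ : ℝ}

theorem summable_adaptedNorm (hσ : 0 ≤ σ) (hA : Summable fun k : ℕ => σ⁻¹ ^ k * ‖A ^ k‖)
    (x : E) : Summable fun k : ℕ => σ⁻¹ ^ k * ‖(A ^ k) x‖ :=
  (hA.mul_right ‖x‖).of_nonneg_of_le (fun k => by positivity) fun k => by
    rw [mul_assoc]
    exact mul_le_mul_of_nonneg_left ((A ^ k).le_opNorm x) (by positivity)

theorem norm_le_adaptedNorm (hσ : 0 ≤ σ) (hA : Summable fun k : ℕ => σ⁻¹ ^ k * ‖A ^ k‖)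
    (x : E) : ‖x‖ ≤ adaptedNorm A σ x := by
  calc ‖x‖ = σ⁻¹ ^ 0 * ‖(A ^ 0) x‖ := by simp
    _ ≤ adaptedNorm A σ x := (summable_adaptedNorm hσ hA x).le_tsum 0 fun k _ => by positivity

theorem adaptedNorm_le (hσ : 0 ≤ σ) (hA : Summable fun k : ℕ => σ⁻¹ ^ k * ‖A ^ k‖) (x : E) :
    adaptedNorm A σ x ≤ (∑' k : ℕ, σ⁻¹ ^ k * ‖A ^ k‖) * ‖x‖ := by
  rw [← tsum_mul_right]
  refine (summable_adaptedNorm hσ hA x).tsum_le_tsum (fun k => ?_) (hA.mul_right ‖x‖)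
  rw [mul_assoc]
  exact mul_le_mul_of_nonneg_left ((A ^ k).le_opNorm x) (by positivity)

theorem adaptedNorm_add_le (hσ : 0 ≤ σ) (hA : Summable fun k : ℕ => σ⁻¹ ^ k * ‖A ^ k‖)
    (x y : E) : adaptedNorm A σ (x + y) ≤ adaptedNorm A σ x + adaptedNorm A σ y := by
  have hx := summable_adaptedNorm hσ hA x
  have hy := summable_adaptedNorm hσ hA y
  rw [adaptedNorm, adaptedNorm, adaptedNorm, ← hx.tsum_add hy]
  refine (summable_adaptedNorm hσ hA _).tsum_le_tsum (fun k => ?_) (hx.add hy)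
  rw [← mul_add, map_add]
  exact mul_le_mul_of_nonneg_left (norm_add_le _ _) (by positivity)

theorem adaptedNorm_apply_le (hσ : 0 < σ) (hA : Summable fun k : ℕ => σ⁻¹ ^ k * ‖A ^ k‖)
    (x : E) : adaptedNorm A σ (A x) ≤ σ * adaptedNorm A σ x := by
  have hshift : adaptedNorm A σ x = ‖x‖ + σ⁻¹ * adaptedNorm A σ (A x) := by
    rw [adaptedNorm, (summable_adaptedNorm hσ.le hA x).tsum_eq_zero_add, adaptedNorm,
      ← tsum_mul_left]
    congr 1
    · simp
    · congr 1 with k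
      rw [pow_succ', pow_succ, mul_assoc]
      rfl
  rw [hshift, mul_add, mul_inv_cancel_left₀ hσ.ne']
  linarith [mul_nonneg hσ.le (norm_nonneg x)]

theorem exists_eventually_adaptedNorm_le_of_hasFDerivAt {f : E → E} (hf0 : f 0 = 0)
    (hfA : HasFDerivAt f A 0) (hσ0 : 0 < σ) (hσ1 : σ < 1)
    (hA : Summable fun k : ℕ => σ⁻¹ ^ k * ‖A ^ k‖) :
    ∃ θ, 0 ≤ θ ∧ θ < 1 ∧ ∀ᶠ x in 𝓝 0, adaptedNorm A σ (f x) ≤ θ * adaptedNorm A σ x := by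
  set K := ∑' k : ℕ, σ⁻¹ ^ k * ‖A ^ k‖
  have hK : 0 ≤ K := tsum_nonneg fun k => by positivity
  set ε := (1 - σ) / (2 * (K + 1))
  have hε : 0 < ε := div_pos (by linarith) (by positivity)
  have hKε : K * ε ≤ (1 - σ) / 2 := by
    calc K * ε ≤ (K + 1) * ε := by nlinarith
      _ = (1 - σ) / 2 := by simp only [ε]; field_simp
  refine ⟨(1 + σ) / 2, by linarith, by linarith, ?_⟩
  have hrem := (hasFDerivAt_iff_isLittleO_nhds_zero.1 hfA).bound hε
  filter_upwards [hrem] with x hx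
  simp only [zero_add, hf0, sub_zero] at hx
  have hNx := norm_le_adaptedNorm hσ0.le hA x
  calc adaptedNorm A σ (f x) = adaptedNorm A σ (A x + (f x - A x)) := by rw [add_sub_cancel]
    _ ≤ σ * adaptedNorm A σ x + K * ‖f x - A x‖ :=
      (adaptedNorm_add_le hσ0.le hA _ _).trans
        (add_le_add (adaptedNorm_apply_le hσ0 hA x) (adaptedNorm_le hσ0.le hA _))
    _ ≤ σ * adaptedNorm A σ x + K * ε * adaptedNorm A σ x := by
      rw [mul_assoc K]
      gcongr
      exact hx.trans (mul_le_mul_of_nonneg_left hNx hε.le)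
    _ ≤ (1 + σ) / 2 * adaptedNorm A σ x := by nlinarith [norm_nonneg x]

end AdaptedNorm

section LocalStability

variable {E : Type*} [NormedAddCommGroup E]

theorem eventually_norm_iterate_le_of_lyapunov {f : E → E} {N : E → ℝ} {K θ : ℝ}
    (hθ0 : 0 ≤ θ) (hθ1 : θ ≤ 1) (hN : ∀ x, ‖x‖ ≤ N x) (hNK : ∀ x, N x ≤ K * ‖x‖)
    (hf : ∀ᶠ x in 𝓝 0, N (f x) ≤ θ * N x) :
    ∀ᶠ x in 𝓝 0, ∀ k, ‖f^[k] x‖ ≤ K * θ ^ k * ‖x‖ := by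
  obtain ⟨δ, hδ, hfδ⟩ := Metric.eventually_nhds_iff.1 hf
  have hsmall : ∀ᶠ x in 𝓝 (0 : E), K * ‖x‖ < δ := by
    have : Tendsto (fun x : E => K * ‖x‖) (𝓝 0) (𝓝 0) :=
      (continuous_norm.const_mul K).tendsto' 0 0 (by simp)
    exact this.eventually (gt_mem_nhds hδ)
  filter_upwards [hsmall] with x hx k
  have hdecay : ∀ k, N (f^[k] x) ≤ θ ^ k * N x := by
    intro k
    induction k with
    | zero => simp
    | succ k ih =>
      have hNx : 0 ≤ N x := (norm_nonneg x).trans (hN x)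
      have hk : ‖f^[k] x‖ < δ := calc
        ‖f^[k] x‖ ≤ θ ^ k * N x := (hN _).trans ih
        _ ≤ N x := mul_le_of_le_one_left hNx (pow_le_one₀ hθ0 hθ1)
        _ ≤ K * ‖x‖ := hNK x
        _ < δ := hx
      calc N (f^[k + 1] x) = N (f (f^[k] x)) := by rw [Function.iterate_succ_apply']
        _ ≤ θ * N (f^[k] x) := hfδ (by rwa [dist_zero_right])
        _ ≤ θ * (θ ^ k * N x) := mul_le_mul_of_nonneg_left ih hθ0
        _ = θ ^ (k + 1) * N x := by ring
  calc ‖f^[k] x‖ ≤ θ ^ k * N x := (hN _).trans (hdecay k)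
    _ ≤ θ ^ k * (K * ‖x‖) := mul_le_mul_of_nonneg_left (hNK x) (by positivity)
    _ = K * θ ^ k * ‖x‖ := by ring

theorem eventually_tendsto_iterate_zero {f : E → E} {C θ : ℝ} (hθ0 : 0 ≤ θ) (hθ1 : θ < 1)
    (hexp : ∀ᶠ x in 𝓝 0, ∀ k, ‖f^[k] x‖ ≤ C * θ ^ k * ‖x‖) :
    ∀ᶠ x in 𝓝 0, Tendsto (fun k => f^[k] x) atTop (𝓝 0) := by
  filter_upwards [hexp] with x hx
  refine squeeze_zero_norm hx ?_
  simpa using ((tendsto_pow_atTop_nhds_zero_of_lt_one hθ0 hθ1).const_mul C).mul_const ‖x‖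

theorem summable_sq_norm_iterate {f : E → E} {C θ : ℝ} (hθ0 : 0 ≤ θ) (hθ1 : θ < 1)
    (hexp : ∀ᶠ x in 𝓝 0, ∀ k, ‖f^[k] x‖ ≤ C * θ ^ k * ‖x‖) {x : E}
    (hx : Tendsto (fun k => f^[k] x) atTop (𝓝 0)) :
    Summable fun k => ‖f^[k] x‖ ^ 2 := by
  obtain ⟨K, hK⟩ := (hx.eventually hexp).exists
  rw [← summable_nat_add_iff K]
  refine ((summable_geometric_of_lt_one (by positivity) (by nlinarith : θ ^ 2 < 1)).mul_left
    ((C * ‖f^[K] x‖) ^ 2)).of_nonneg_of_le (fun k => by positivity) fun k => ?_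
  calc ‖f^[k + K] x‖ ^ 2 = ‖f^[k] (f^[K] x)‖ ^ 2 := by rw [Function.iterate_add_apply]
    _ ≤ (C * θ ^ k * ‖f^[K] x‖) ^ 2 := pow_le_pow_left₀ (norm_nonneg _) (hK k) 2
    _ = (C * ‖f^[K] x‖) ^ 2 * (θ ^ 2) ^ k := by ring

end LocalStability

theorem exists_eventually_norm_iterate_le_geometric {E : Type*} [NormedAddCommGroup E]
    [NormedSpace ℝ E] {f : E → E} {A : E →L[ℝ] E} (hf0 : f 0 = 0) (hfA : HasFDerivAt f A 0)
    {c ρ : ℝ} (hρ0 : 0 ≤ ρ) (hρ1 : ρ < 1) (hAk : ∀ k : ℕ, ‖A ^ k‖ ≤ c * ρ ^ k) :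
    ∃ C θ, 0 ≤ θ ∧ θ < 1 ∧ ∀ᶠ x in 𝓝 0, ∀ k, ‖f^[k] x‖ ≤ C * θ ^ k * ‖x‖ := by
  set σ := (1 + ρ) / 2
  have hσ0 : 0 < σ := by positivity
  have hρσ : ρ < σ := by simp only [σ]; linarith
  have hσ1 : σ < 1 := by simp only [σ]; linarith
  have hA : Summable fun k : ℕ => σ⁻¹ ^ k * ‖A ^ k‖ := by
    refine ((summable_geometric_of_lt_one (by positivity)
      ((div_lt_one hσ0).2 hρσ)).mul_left c).of_nonneg_of_le
      (fun k => by positivity) fun k => ?_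
    calc σ⁻¹ ^ k * ‖A ^ k‖ ≤ σ⁻¹ ^ k * (c * ρ ^ k) := by gcongr; exact hAk k
      _ = c * (ρ / σ) ^ k := by rw [div_pow, inv_pow]; ring
  obtain ⟨θ, hθ0, hθ1, hcontr⟩ :=
    exists_eventually_adaptedNorm_le_of_hasFDerivAt hf0 hfA hσ0 hσ1 hA
  exact ⟨_, θ, hθ0, hθ1, eventually_norm_iterate_le_of_lyapunov hθ0 hθ1.le
    (norm_le_adaptedNorm hσ0.le hA) (adaptedNorm_le hσ0.le hA) hcontr⟩

theorem isOpen_basin {X : Type*} [TopologicalSpace X] {f : X → X} {Ω : Set X} {p : X}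
    (hΩ : IsOpen Ω) (hf : ContinuousOn f Ω) (hmaps : MapsTo f Ω Ω)
    (hp : ∀ᶠ x in 𝓝 p, x ∈ Ω ∧ Tendsto (fun k => f^[k] x) atTop (𝓝 p)) :
    IsOpen {x ∈ Ω | Tendsto (fun k => f^[k] x) atTop (𝓝 p)} := by
  obtain ⟨V, hVbasin, hV, hpV⟩ := mem_nhds_iff.1 hp
  suffices {x ∈ Ω | Tendsto (fun k => f^[k] x) atTop (𝓝 p)} = ⋃ K, Ω ∩ f^[K] ⁻¹' V by
    rw [this]
    exact isOpen_iUnion fun K => (hf.iterate hmaps K).isOpen_inter_preimage hΩ hV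
  ext x
  simp only [mem_ofPred_eq, mem_iUnion, mem_inter_iff, mem_preimage]
  constructor
  · rintro ⟨hxΩ, hx⟩
    exact (hx.eventually (hV.mem_nhds hpV)).exists.imp fun K hK => ⟨hxΩ, hK⟩
  · rintro ⟨K, hxΩ, hK⟩
    refine ⟨hxΩ, (tendsto_add_atTop_iff_nat K).1 ?_⟩
    simpa only [Function.iterate_add_apply] using (hVbasin hK).2

theorem tendsto_zero_of_summable_sq_norm {E : Type*} [SeminormedAddGroup E] {u : ℕ → E}
    (hu : Summable fun k => ‖u k‖ ^ 2) : Tendsto u atTop (𝓝 0) := by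
  refine tendsto_zero_iff_norm_tendsto_zero.2 ?_
  simpa [Real.sqrt_sq (norm_nonneg _)] using hu.tendsto_atTop_zero.sqrt

theorem tendsto_tsum_nhdsWithin_atTop_of_not_summable {X : Type*} [TopologicalSpace X]
    {g : ℕ → X → ℝ} {s : Set X} {x₀ : X} (hg : ∀ k x, 0 ≤ g k x)
    (hcont : ∀ k, ContinuousAt (g k) x₀) (hs : ∀ x ∈ s, Summable fun k => g k x)
    (hx₀ : ¬Summable fun k => g k x₀) :
    Tendsto (fun x => ∑' k, g k x) (𝓝[s] x₀) atTop := by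
  rw [tendsto_atTop]
  intro b
  obtain ⟨N, hN⟩ := (((not_summable_iff_tendsto_nat_atTop_of_nonneg fun k => hg k x₀).1
    hx₀).eventually_gt_atTop b).exists
  have hpartial : ContinuousAt (fun x => ∑ k ∈ Finset.range N, g k x) x₀ :=
    tendsto_finsetSum _ fun k _ => hcont k
  filter_upwards [eventually_nhdsWithin_of_eventually_nhds (hpartial.eventually (eventually_gt_nhds hN)),
    self_mem_nhdsWithin] with x hxb hxs
  exact hxb.le.trans ((hs x hxs).sum_le_tsum _ fun k _ => hg k x)

theorem stmt_9_general (n : ℕ)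
    (Ω : Set (EuclideanSpace ℝ (Fin n))) (hΩ : IsOpen Ω)
    (h0Ω : (0 : EuclideanSpace ℝ (Fin n)) ∈ Ω)
    (f : EuclideanSpace ℝ (Fin n) → EuclideanSpace ℝ (Fin n))
    (hf : AnalyticOn ℝ f Ω) (hmaps : Set.MapsTo f Ω Ω) (hf0 : f 0 = 0)
    (A : EuclideanSpace ℝ (Fin n) →L[ℝ] EuclideanSpace ℝ (Fin n))
    (hA : HasFDerivAt f A 0)
    (c ρ : ℝ) (hρ : ρ ∈ Set.Ioo (0 : ℝ) 1)
    (hAk : ∀ k : ℕ, ‖A ^ k‖ ≤ c * ρ ^ k)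
    (x0 : EuclideanSpace ℝ (Fin n))
    (hx0 : x0 ∈ frontier {x ∈ Ω | Tendsto (fun k => f^[k] x) atTop (𝓝 0)})
    (hx0Ω : x0 ∈ Ω) :
    Tendsto (fun x : EuclideanSpace ℝ (Fin n) => ∑' k : ℕ, ‖f^[k] x‖ ^ 2)
      (𝓝[{x ∈ Ω | Tendsto (fun k => f^[k] x) atTop (𝓝 0)}] x0) atTop := by
  obtain ⟨C, θ, hθ0, hθ1, hexp⟩ :=
    exists_eventually_norm_iterate_le_geometric hf0 hA hρ.1.le hρ.2 hAk
  have hcont : ContinuousOn f Ω := hf.continuousOn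
  have hbasin : IsOpen {x ∈ Ω | Tendsto (fun k => f^[k] x) atTop (𝓝 0)} :=
    isOpen_basin hΩ hcont hmaps
      ((hΩ.eventually_mem h0Ω).and (eventually_tendsto_iterate_zero hθ0 hθ1 hexp))
  have hx0_not_mem : x0 ∉ {x ∈ Ω | Tendsto (fun k => f^[k] x) atTop (𝓝 0)} :=
    fun h => (hbasin.inter_frontier_eq.subset ⟨h, hx0⟩ : x0 ∈ (∅ : Set _))
  exact tendsto_tsum_nhdsWithin_atTop_of_not_summable (fun k x => by positivity)
    (fun k => ((hcont.iterate hmaps k).continuousAt (hΩ.mem_nhds hx0Ω)).norm.pow 2)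
    (fun x hx => summable_sq_norm_iterate hθ0 hθ1 hexp hx.2)
    (fun hsum => hx0_not_mem ⟨hx0Ω, tendsto_zero_of_summable_sq_norm hsum⟩)

/-- the Lyapunov function `V` blows up at the boundary of `DA(0)`. -/
theorem stmt_9 (n : ℕ) (hn : 1 ≤ n)
    (Ω : Set (EuclideanSpace ℝ (Fin n))) (hΩ : IsOpen Ω)
    (h0Ω : (0 : EuclideanSpace ℝ (Fin n)) ∈ Ω)
    (f : EuclideanSpace ℝ (Fin n) → EuclideanSpace ℝ (Fin n))
    (hf : AnalyticOn ℝ f Ω) (hmaps : Set.MapsTo f Ω Ω) (hf0 : f 0 = 0)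
    (A : EuclideanSpace ℝ (Fin n) →L[ℝ] EuclideanSpace ℝ (Fin n))
    (hA : HasFDerivAt f A 0)
    (c ρ : ℝ) (hc : 1 ≤ c) (hρ : ρ ∈ Set.Ioo (0 : ℝ) 1)
    (hAk : ∀ k : ℕ, ‖A ^ k‖ ≤ c * ρ ^ k)
    (x0 : EuclideanSpace ℝ (Fin n))
    (hx0 : x0 ∈ frontier {x ∈ Ω | Tendsto (fun k => f^[k] x) atTop (𝓝 0)})
    (hx0Ω : x0 ∈ Ω) :
    Tendsto (fun x : EuclideanSpace ℝ (Fin n) => ∑' k : ℕ, ‖f^[k] x‖ ^ 2)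
      (𝓝[{x ∈ Ω | Tendsto (fun k => f^[k] x) atTop (𝓝 0)}] x0) atTop :=
  stmt_9_general n Ω hΩ h0Ω f hf hmaps hf0 A hA c ρ hρ hAk x0 hx0 hx0Ω
end

section
/- Key exponential estimate: let E = ℝⁿ, let A : E → E be a continuous linear map, let c̄ ≥ 1, r ∈ (0,1) satisfy ‖Aᵏ(x)‖ ≤ c̄·rᵏ·‖x‖ for all x ∈ E and all k ∈ ℕ, and set ε = (1 − r)/(2c̄). Suppose (y_k), k ∈ ℕ, is a sequence in E satisfying y_{k+1} = A(y_k) + h_k with ‖h_k‖ ≤ ε·‖y_k‖ for all k ∈ ℕ. Then ‖y_k‖ ≤ c̄·‖y₀‖·((r + 1)/2)ᵏ for all k ∈ ℕ. -/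
/-!
Variation of constants writes `y k = Aᵏ y₀ + ∑_{j<k} A^(k-1-j) h j`, so with `s = (r + 1)/2`
and `c ε = s - r` the norms satisfy `‖y k‖ ≤ c rᵏ ‖y₀‖ + ∑_{j<k} r^(k-1-j) (s - r) ‖y j‖`.
A discrete Gronwall argument by strong induction closes this with the bound `c ‖y₀‖ sᵏ`, since
`∑_{j<k} r^(k-1-j) (s - r) sʲ = sᵏ - rᵏ`.
-/

open Finset

theorem ContinuousLinearMap.eq_pow_apply_add_sum_of_succ_eq {R E : Type*} [Semiring R]
    [TopologicalSpace E] [AddCommMonoid E] [Module R E] (A : E →L[R] E) {h y : ℕ → E}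
    (hy : ∀ k, y (k + 1) = A (y k) + h k) (k : ℕ) :
    y k = (A ^ k) (y 0) + ∑ j ∈ range k, (A ^ (k - 1 - j)) (h j) := by
  induction k with
  | zero => simp
  | succ k ih =>
    have hpow : ∀ j ∈ range k, A ((A ^ (k - 1 - j)) (h j)) = (A ^ (k + 1 - 1 - j)) (h j) := by
      intro j hj
      rw [show k + 1 - 1 - j = k - 1 - j + 1 by have := mem_range.mp hj; omega, pow_succ']
      rfl
    rw [hy k, ih, map_add, map_sum, sum_congr rfl hpow, sum_range_succ, add_assoc,
      Nat.add_sub_cancel, Nat.sub_self, pow_zero, pow_succ']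
    rfl

theorem norm_le_mul_pow_add_sum_of_succ_eq {R E : Type*} [Semiring R]
    [SeminormedAddCommGroup E] [Module R E] {A : E →L[R] E} {c r : ℝ} (hA : ∀ x (k : ℕ), ‖(A ^ k) x‖ ≤ c * r ^ k * ‖x‖)
    {h y : ℕ → E} (hy : ∀ k, y (k + 1) = A (y k) + h k) (k : ℕ) :
    ‖y k‖ ≤ c * r ^ k * ‖y 0‖ + ∑ j ∈ range k, c * r ^ (k - 1 - j) * ‖h j‖ := by
  rw [A.eq_pow_apply_add_sum_of_succ_eq hy k]
  exact (norm_add_le _ _).trans (add_le_add (hA _ _) ((norm_sum_le _ _).trans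
    (sum_le_sum fun j _ => hA _ _)))

theorem le_mul_pow_of_le_mul_pow_add_sum {a : ℕ → ℝ} {C r s : ℝ} (hr : 0 ≤ r) (hrs : r ≤ s)
    (ha : ∀ k, a k ≤ C * r ^ k + ∑ j ∈ range k, r ^ (k - 1 - j) * ((s - r) * a j)) (k : ℕ) :
    a k ≤ C * s ^ k := by
  induction k using Nat.strong_induction_on with
  | _ k ih =>
    calc a k ≤ C * r ^ k + ∑ j ∈ range k, r ^ (k - 1 - j) * ((s - r) * (C * s ^ j)) := by
          refine (ha k).trans ?_
          have := sub_nonneg.mpr hrs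
          gcongr with j hj
          exact ih j (mem_range.mp hj)
      _ = C * r ^ k + C * ((∑ j ∈ range k, s ^ j * r ^ (k - 1 - j)) * (s - r)) := by
          rw [sum_mul, mul_sum]
          exact congrArg _ (sum_congr rfl fun j _ => by ring)
      _ = C * s ^ k := by rw [geom_sum₂_mul]; ring

/-- key exponential estimate obtained via variation of constants and the
discrete Gronwall inequality. -/
theorem stmt_13 (n : ℕ)
    (A : EuclideanSpace ℝ (Fin n) →L[ℝ] EuclideanSpace ℝ (Fin n))
    (c : ℝ) (hc : 1 ≤ c) (r : ℝ) (hr : r ∈ Set.Ioo (0 : ℝ) 1)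
    (hA : ∀ (x : EuclideanSpace ℝ (Fin n)) (k : ℕ), ‖(A ^ k) x‖ ≤ c * r ^ k * ‖x‖)
    (h y : ℕ → EuclideanSpace ℝ (Fin n))
    (hy : ∀ k : ℕ, y (k + 1) = A (y k) + h k)
    (hh : ∀ k : ℕ, ‖h k‖ ≤ (1 - r) / (2 * c) * ‖y k‖) :
    ∀ k : ℕ, ‖y k‖ ≤ c * ‖y 0‖ * ((r + 1) / 2) ^ k := by
  obtain ⟨hr0, hr1⟩ := hr
  have hcε : c * ((1 - r) / (2 * c)) = (r + 1) / 2 - r := by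
    field_simp [(zero_lt_one.trans_le hc).ne']
    ring
  refine le_mul_pow_of_le_mul_pow_add_sum hr0.le (by linarith) fun k => ?_
  calc ‖y k‖ ≤ c * r ^ k * ‖y 0‖ + ∑ j ∈ range k, c * r ^ (k - 1 - j) * ‖h j‖ :=
        norm_le_mul_pow_add_sum_of_succ_eq hA hy k
    _ ≤ c * r ^ k * ‖y 0‖ + ∑ j ∈ range k, c * r ^ (k - 1 - j) * ((1 - r) / (2 * c) * ‖y j‖) := by
        gcongr with j
        exact hh j
    _ = c * ‖y 0‖ * r ^ k + ∑ j ∈ range k, r ^ (k - 1 - j) * (((r + 1) / 2 - r) * ‖y j‖) := by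
        rw [← hcε]
        congr 1
        · ring
        · exact sum_congr rfl fun j _ => by ring
end

section
/- For the map g : ℝ² → ℝ² defined by g(x, y) = (x·y + y, y³), the domain of attraction of the fixed point (0,0) is exactly ℝ × (−1, 1): for every (x, y) ∈ ℝ², the iterates g⁽ᵏ⁾(x, y) converge to (0,0) as k → ∞ if and only if |y| < 1. -/
/-!
The second coordinate decouples: its iterates are `y ^ 3 ^ k`, which tend to `0` exactly when
`|y| < 1`. The first coordinate then obeys `u (k + 1) = (u k + 1) * a k` with `a k = y ^ 3 ^ k`.
Since `|a k| ≤ |y| < 1`, the bound `max |u 0| (|y| / (1 - |y|))` is preserved, so `u` is bounded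
and `u (k + 1)` is a bounded sequence times a null sequence.
-/

open Filter Topology

theorem PiLp.tendsto_nhds_iff {ι : Type*} {β : ι → Type*} [∀ i, TopologicalSpace (β i)]
    {p : ENNReal} {α : Type*} {l : Filter α} {f : α → PiLp p β} {x : PiLp p β} :
    Tendsto f l (𝓝 x) ↔ ∀ i, Tendsto (fun a ↦ f a i) l (𝓝 (x i)) := by
  rw [(Topology.IsInducing.induced (@WithLp.ofLp p (∀ i, β i))).tendsto_nhds_iff,
    tendsto_pi_nhds]
  rfl

theorem tendsto_pow_pow_atTop_nhds_zero_iff {r : ℝ} {n : ℕ} (hn : 1 < n) :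
    Tendsto (fun k : ℕ ↦ r ^ n ^ k) atTop (𝓝 0) ↔ |r| < 1 := by
  refine ⟨fun h ↦ ?_, fun hr ↦ ?_⟩
  · by_contra! hr
    have h_ge : ∀ k : ℕ, 1 ≤ |r ^ n ^ k| := fun k ↦ by
      rw [abs_pow]
      exact one_le_pow₀ hr
    have : (1 : ℝ) ≤ |0| := ge_of_tendsto' h.abs h_ge
    norm_num at this
  · exact (tendsto_pow_atTop_nhds_zero_iff.2 hr).comp (tendsto_pow_atTop_atTop_of_one_lt hn)

section AddOneMulRecurrence

variable {u a : ℕ → ℝ} {r : ℝ}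

theorem abs_le_of_succ_eq_add_one_mul (hr : r < 1) (ha : ∀ k, |a k| ≤ r)
    (hu : ∀ k, u (k + 1) = (u k + 1) * a k) (k : ℕ) :
    |u k| ≤ max |u 0| (r / (1 - r)) := by
  set C := max |u 0| (r / (1 - r))
  have h_one_sub : 0 < 1 - r := sub_pos.2 hr
  have hr_le : r ≤ C * (1 - r) := (div_le_iff₀ h_one_sub).1 (le_max_right _ _)
  have hr0 : 0 ≤ r := (abs_nonneg _).trans (ha 0)
  induction k with
  | zero => exact le_max_left _ _
  | succ k ih =>
    calc |u (k + 1)| = |u k + 1| * |a k| := by rw [hu, abs_mul]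
      _ ≤ (C + 1) * r := by
        gcongr
        · exact (abs_add_le _ _).trans (by rw [abs_one]; linarith)
        · exact ha k
      _ ≤ C := by linarith

theorem tendsto_zero_of_succ_eq_add_one_mul (hr : r < 1) (ha : ∀ k, |a k| ≤ r)
    (ha_tendsto : Tendsto a atTop (𝓝 0)) (hu : ∀ k, u (k + 1) = (u k + 1) * a k) :
    Tendsto u atTop (𝓝 0) := by
  rw [← tendsto_add_atTop_iff_nat 1]
  simp_rw [hu]
  refine isBoundedUnder_le_mul_tendsto_zero ⟨max |u 0| (r / (1 - r)) + 1, ?_⟩ ha_tendsto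
  refine eventually_map.2 (Eventually.of_forall fun k ↦ ?_)
  calc ‖u k + 1‖ ≤ |u k| + 1 := by simpa using norm_add_le (u k) 1
    _ ≤ max |u 0| (r / (1 - r)) + 1 := by
      gcongr
      exact abs_le_of_succ_eq_add_one_mul hr ha hu k

end AddOneMulRecurrence

/-- for `g(x,y) = (xy + y, y³)`, the domain of attraction of the fixed point
`(0,0)` is exactly `ℝ × (−1,1)`. -/
theorem stmt_15 (g : EuclideanSpace ℝ (Fin 2) → EuclideanSpace ℝ (Fin 2))
    (hg : ∀ p : EuclideanSpace ℝ (Fin 2),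
      g p 0 = p 0 * p 1 + p 1 ∧ g p 1 = (p 1) ^ 3) :
    ∀ p : EuclideanSpace ℝ (Fin 2),
      Tendsto (fun k => g^[k] p) atTop (𝓝 0) ↔ |p 1| < 1 := by
  intro p
  have hy : ∀ k, (g^[k] p) 1 = p 1 ^ 3 ^ k := fun k ↦ by
    induction k with
    | zero => simp
    | succ k ih => rw [Function.iterate_succ_apply', (hg _).2, ih, ← pow_mul, ← pow_succ]
  have hx : ∀ k, (g^[k + 1] p) 0 = ((g^[k] p) 0 + 1) * p 1 ^ 3 ^ k := fun k ↦ by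
    rw [Function.iterate_succ_apply', (hg _).1, hy]
    ring
  rw [PiLp.tendsto_nhds_iff, Fin.forall_fin_two]
  simp only [hy, tendsto_pow_pow_atTop_nhds_zero_iff (show 1 < 3 by norm_num),
    WithLp.ofLp_zero, Pi.zero_apply]
  refine ⟨And.right, fun hy_lt ↦ ⟨?_, hy_lt⟩⟩
  have hy_le : ∀ k, |p 1 ^ 3 ^ k| ≤ |p 1| := fun k ↦ by
    rw [abs_pow]
    exact pow_le_of_le_one (abs_nonneg _) hy_lt.le (by positivity)
  exact tendsto_zero_of_succ_eq_add_one_mul hy_lt hy_le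
    ((tendsto_pow_pow_atTop_nhds_zero_iff (by norm_num)).2 hy_lt) hx
end

section
/- For the map g : ℝ² → ℝ² defined by g(x, y) = (4x² + y, x·y), the fixed point (0,0) is asymptotically stable: for every ε > 0 there exists δ > 0 such that ‖(x,y)‖ < δ implies ‖g⁽ᵏ⁾(x,y)‖ < ε for all k ∈ ℕ, and there exists r > 0 such that ‖(x,y)‖ < r implies g⁽ᵏ⁾(x,y) → (0,0) as k → ∞. -/
/-!
The weighted ℓ¹-norm `V (x, y) = |x| + 2|y|` is a strict Lyapunov function for `g` near the
origin: when `|x| ≤ 1/10`,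
`V (g (x, y)) ≤ 4x² + |y| + 2|x||y| ≤ (2/5)|x| + (6/5)|y| ≤ (3/5) V (x, y)`,
even though the linear part `(x, y) ↦ (y, 0)` of `g` does not contract the Euclidean norm.
Since `V` is comparable to the Euclidean norm, `V` decays geometrically along orbits starting
near `0`, which gives both stability and attraction.
-/

open Filter Topology

section Lyapunov

variable {q η : ℝ}

section
variable {α : Type*} {f : α → α} {V : α → ℝ}

theorem Function.iterate_le_pow_mul_of_contracting (hV : ∀ p, 0 ≤ V p) (hq₀ : 0 ≤ q)
    (hq₁ : q ≤ 1) (hf : ∀ p, V p ≤ η → V (f p) ≤ q * V p) {p : α} (hp : V p ≤ η) (k : ℕ) :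
    V (f^[k] p) ≤ q ^ k * V p := by
  induction k with
  | zero => simp
  | succ k ih =>
    have hk : V (f^[k] p) ≤ η :=
      ih.trans <| (mul_le_of_le_one_left (hV p) (pow_le_one₀ hq₀ hq₁)).trans hp
    rw [Function.iterate_succ_apply', pow_succ', mul_assoc]
    exact (hf _ hk).trans (mul_le_mul_of_nonneg_left ih hq₀)

end

variable {E : Type*} [SeminormedAddCommGroup E] {f : E → E} {V : E → ℝ} {C : ℝ}

theorem norm_iterate_le_of_contracting (hlow : ∀ p, ‖p‖ ≤ V p) (hup : ∀ p, V p ≤ C * ‖p‖)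
    (hq₀ : 0 ≤ q) (hq₁ : q ≤ 1) (hf : ∀ p, V p ≤ η → V (f p) ≤ q * V p) (p : E)
    (hp : C * ‖p‖ ≤ η) (k : ℕ) : ‖f^[k] p‖ ≤ q ^ k * (C * ‖p‖) := by
  have hV : ∀ p, 0 ≤ V p := fun p => (norm_nonneg p).trans (hlow p)
  calc ‖f^[k] p‖ ≤ V (f^[k] p) := hlow _
    _ ≤ q ^ k * V p :=
      Function.iterate_le_pow_mul_of_contracting hV hq₀ hq₁ hf ((hup p).trans hp) k
    _ ≤ q ^ k * (C * ‖p‖) := mul_le_mul_of_nonneg_left (hup p) (pow_nonneg hq₀ k)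

theorem stable_and_attracting_of_contracting (hlow : ∀ p, ‖p‖ ≤ V p)
    (hup : ∀ p, V p ≤ C * ‖p‖) (hC : 0 < C) (hη : 0 < η) (hq₀ : 0 ≤ q) (hq₁ : q < 1)
    (hf : ∀ p, V p ≤ η → V (f p) ≤ q * V p) :
    (∀ ε > 0, ∃ δ > 0, ∀ p : E, ‖p‖ < δ → ∀ k : ℕ, ‖f^[k] p‖ < ε) ∧
    (∃ r > 0, ∀ p : E, ‖p‖ < r → Tendsto (fun k => f^[k] p) atTop (𝓝 0)) := by
  have bound := norm_iterate_le_of_contracting hlow hup hq₀ hq₁.le hf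
  refine ⟨fun ε hε => ⟨min (ε / C) (η / C), by positivity, fun p hp k => ?_⟩,
    ⟨η / C, by positivity, fun p hp => ?_⟩⟩
  · have hpε : C * ‖p‖ < ε := (lt_div_iff₀' hC).1 (hp.trans_le (min_le_left _ _))
    have hpη : C * ‖p‖ ≤ η := ((lt_div_iff₀' hC).1 (hp.trans_le (min_le_right _ _))).le
    calc ‖f^[k] p‖ ≤ q ^ k * (C * ‖p‖) := bound p hpη k
      _ ≤ C * ‖p‖ := mul_le_of_le_one_left (by positivity) (pow_le_one₀ hq₀ hq₁.le)
      _ < ε := hpε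
  · have hpη : C * ‖p‖ ≤ η := ((lt_div_iff₀' hC).1 hp).le
    rw [tendsto_zero_iff_norm_tendsto_zero]
    refine squeeze_zero (fun k => norm_nonneg _) (bound p hpη) ?_
    simpa using (tendsto_pow_atTop_nhds_zero_of_lt_one hq₀ hq₁).mul_const (C * ‖p‖)

end Lyapunov

theorem EuclideanSpace.norm_le_abs_add_abs (p : EuclideanSpace ℝ (Fin 2)) :
    ‖p‖ ≤ |p 0| + |p 1| := by
  rw [EuclideanSpace.norm_eq, Fin.sum_univ_two, Real.sqrt_le_iff]
  simp only [Real.norm_eq_abs, sq_abs]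
  constructor
  · positivity
  · nlinarith [abs_mul_abs_self (p 0), abs_mul_abs_self (p 1), abs_nonneg (p 0),
      abs_nonneg (p 1)]

theorem abs_add_two_mul_abs_le_of_abs_le {x y : ℝ} (hx : |x| ≤ 1 / 10) :
    |4 * x ^ 2 + y| + 2 * |x * y| ≤ 3 / 5 * (|x| + 2 * |y|) := by
  have hx₀ := abs_nonneg x
  have hy₀ := abs_nonneg y
  calc |4 * x ^ 2 + y| + 2 * |x * y| ≤ 4 * |x| ^ 2 + |y| + 2 * (|x| * |y|) := by
        rw [abs_mul, sq_abs]
        linarith [abs_add_le (4 * x ^ 2) y, abs_of_nonneg (by positivity : 0 ≤ 4 * x ^ 2)]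
    _ ≤ 3 / 5 * (|x| + 2 * |y|) := by nlinarith

/-- for `g(x,y) = (4x² + y, xy)`, the fixed point `(0,0)` is asymptotically
stable (Euclidean norm on ℝ²). -/
theorem stmt_17 (g : EuclideanSpace ℝ (Fin 2) → EuclideanSpace ℝ (Fin 2))
    (hg : ∀ p : EuclideanSpace ℝ (Fin 2),
      g p 0 = 4 * (p 0) ^ 2 + p 1 ∧ g p 1 = p 0 * p 1) :
    (∀ ε > 0, ∃ δ > 0, ∀ p : EuclideanSpace ℝ (Fin 2), ‖p‖ < δ →
      ∀ k : ℕ, ‖g^[k] p‖ < ε) ∧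
    (∃ r > 0, ∀ p : EuclideanSpace ℝ (Fin 2), ‖p‖ < r →
      Tendsto (fun k => g^[k] p) atTop (𝓝 0)) := by
  let V : EuclideanSpace ℝ (Fin 2) → ℝ := fun p => |p 0| + 2 * |p 1|
  have hlow : ∀ p, ‖p‖ ≤ V p := fun p => by
    linarith [EuclideanSpace.norm_le_abs_add_abs p, abs_nonneg (p 1)]
  have hup : ∀ p, V p ≤ 3 * ‖p‖ := fun p => by
    have := PiLp.norm_apply_le p 0
    have := PiLp.norm_apply_le p 1
    simp only [Real.norm_eq_abs] at *
    linarith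
  refine stable_and_attracting_of_contracting hlow hup (by norm_num) (η := 1 / 10)
    (by norm_num) (by norm_num : (0 : ℝ) ≤ 3 / 5) (by norm_num) fun p hp => ?_
  have hx : |p 0| ≤ 1 / 10 := by linarith [abs_nonneg (p 1)]
  simpa only [V, (hg p).1, (hg p).2] using abs_add_two_mul_abs_le_of_abs_le hx
end
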